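/- Reduction step of Appendix A: let s be a positive half-integer and σ₁,...,σ_N ∈ {±s}; define G_N(σ₁,...,σ_N)(u,v) = e^{−2λs∑σ_k} ∏_{k=1}^{N} ∏_{j'} ( e^{(σ_k/(2s))(v−u)} + e^{(σ_k/(2s))(u−v) + 2j'λ + 2λ(∑_{i=k+1}^{N} σ_i − ∑_{i=1}^{k−1} σ_i)} ), where j' ranges over −s+1/2, −s+3/2, ..., s−1/2. If σ_k + σ_{k+1} = 0 for some 1 ≤ k < N (i.e. σ_{k+1} = −σ_k), then G_N(σ₁,...,σ_k,−σ_k,...,σ_N)(u,v) = H(u,v) · G_{N−2}(σ₁,...,σ̂_k,σ̂_{k+1},...,σ_N)(u,v), where H is a function symmetric in (u,v) and the hats denote omission. -/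

import Mathlib

/-!
Index `σ` by `ℕ` (extending by zero): the `n`-th block of factors of `G_N` depends only on the
spin `f n` and on the shift `∑_{i>n} f i − ∑_{i<n} f i = T − S (n+1) − S n`, where `S` is the prefix
sum and `T` the total. Deleting an adjacent pair with `f k + f (k+1) = 0` changes neither `T` nor
any prefix sum, so all remaining blocks and the prefactor survive unchanged. The two deleted blocks
have the same shift and opposite spins, and flipping the spin amounts to swapping `u` and `v`, so
their product is symmetric.
-/

open Finset

/-- `G_N(σ)(u,v) = e^{−2λs∑σ_k} ∏_{k=1}^{N} ∏_{j'} ( e^{(σ_k/(2s))(v−u)}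
  + e^{(σ_k/(2s))(u−v) + 2j'λ + 2λ(∑_{i>k} σ_i − ∑_{i<k} σ_i)} )`,
where `j'` ranges over `−s+1/2, …, s−1/2` (here `j' = m+1−s−1/2`, `m ∈ {0,…,2s−1}`)
and `s2 = 2s`. -/
noncomputable def Gn (s2 : ℕ) (lam : ℂ) (N : ℕ) (σ : Fin N → ℂ) (u v : ℂ) : ℂ :=
  Complex.exp (-lam * (s2 : ℂ) * ∑ k, σ k) *
    ∏ k : Fin N, ∏ m ∈ range s2,
      (Complex.exp ((σ k / (s2 : ℂ)) * (v - u))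
        + Complex.exp ((σ k / (s2 : ℂ)) * (u - v)
            + 2 * lam * (((m : ℂ) + 1) - (s2 : ℂ) / 2 - 1 / 2)
            + 2 * lam * ((∑ i ∈ Finset.Ioi k, σ i) - ∑ i ∈ Finset.Iio k, σ i)))

/-- The position in the original sequence of the `n`-th entry once entries `k, k+1` are deleted. -/
def skipTwo (k n : ℕ) : ℕ := if n < k then n else n + 2

section skipTwo

variable {k N : ℕ}

theorem skipTwo_of_lt {n : ℕ} (h : n < k) : skipTwo k n = n := if_pos h

theorem skipTwo_of_le {n : ℕ} (h : k ≤ n) : skipTwo k n = n + 2 := if_neg (not_lt.mpr h)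

theorem prod_range_eq_mul_prod_range_skipTwo {M : Type*} [CommMonoid M] (φ : ℕ → M)
    (hk : k + 2 ≤ N) :
    ∏ n ∈ range N, φ n = φ k * φ (k + 1) * ∏ n ∈ range (N - 2), φ (skipTwo k n) := by
  obtain ⟨N, rfl⟩ : ∃ M, N = M + 2 := ⟨N - 2, by omega⟩
  rw [Nat.add_sub_cancel]
  induction N, (by omega : k ≤ N) using Nat.le_induction with
  | base =>
    rw [prod_range_succ, prod_range_succ,
      prod_congr rfl fun n hn => congrArg φ (skipTwo_of_lt (mem_range.mp hn))]
    ac_rfl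
  | succ N hkN ih =>
    rw [prod_range_succ, ih (by omega), prod_range_succ _ N, skipTwo_of_le hkN]
    ac_rfl

variable {α : Type*} [AddCommGroup α] {f : ℕ → α}

theorem sum_range_comp_skipTwo (hf : f k + f (k + 1) = 0) (n : ℕ) :
    ∑ i ∈ range n, f (skipTwo k i) = ∑ i ∈ range (skipTwo k n), f i := by
  rcases lt_or_ge n k with hn | hn
  · rw [skipTwo_of_lt hn]
    exact sum_congr rfl fun i hi => by rw [skipTwo_of_lt ((mem_range.mp hi).trans hn)]
  rw [skipTwo_of_le hn]
  induction n, hn using Nat.le_induction with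
  | base =>
    rw [sum_range_succ, sum_range_succ, add_assoc, hf, add_zero]
    exact sum_congr rfl fun i hi => by rw [skipTwo_of_lt (mem_range.mp hi)]
  | succ n hkn ih =>
    rw [sum_range_succ, ih, sum_range_succ _ (n + 2), skipTwo_of_le hkn]

theorem sum_range_succ_comp_skipTwo (hf : f k + f (k + 1) = 0) (n : ℕ) :
    ∑ i ∈ range (n + 1), f (skipTwo k i) = ∑ i ∈ range (skipTwo k n + 1), f i := by
  rw [sum_range_succ, sum_range_comp_skipTwo hf, sum_range_succ]

end skipTwo

namespace Gn

def shift {α : Type*} [AddCommGroup α] (N : ℕ) (f : ℕ → α) (n : ℕ) : α :=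
  ∑ i ∈ range N, f i - ∑ i ∈ range (n + 1), f i - ∑ i ∈ range n, f i

section shift

variable {α : Type*} [AddCommGroup α] {k N : ℕ} {f : ℕ → α}

theorem shift_comp_skipTwo (hf : f k + f (k + 1) = 0) (hk : k + 2 ≤ N) (n : ℕ) :
    shift (N - 2) (f ∘ skipTwo k) n = shift N f (skipTwo k n) := by
  have hN : skipTwo k (N - 2) = N := by rw [skipTwo_of_le (by omega)]; omega
  simp only [shift, Function.comp_apply]
  rw [sum_range_succ_comp_skipTwo hf, sum_range_comp_skipTwo hf, sum_range_comp_skipTwo hf, hN]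

theorem shift_succ_of_add_eq_zero (hf : f k + f (k + 1) = 0) :
    shift N f (k + 1) = shift N f k := by
  rw [shift, shift, sum_range_succ _ (k + 1), sum_range_succ _ k, add_assoc, hf, add_zero]
  abel

theorem sum_Ioi_sub_sum_Iio {σ : Fin N → α} (hσ : ∀ i : Fin N, σ i = f i) (j : Fin N) :
    ∑ i ∈ Ioi j, σ i - ∑ i ∈ Iio j, σ i = shift N f j := by
  have hIio : ∑ i ∈ Iio j, σ i = ∑ i ∈ range j, f i := by
    rw [← Nat.Iio_eq_range, ← Fin.map_valEmbedding_Iio, sum_map]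
    exact sum_congr rfl fun i _ => hσ i
  have hIoi : ∑ i ∈ Ioi j, σ i = ∑ i ∈ range N, f i - ∑ i ∈ range (j + 1), f i := by
    rw [← sum_range_add_sum_Ico _ (by omega : (j : ℕ) + 1 ≤ N), add_sub_cancel_left,
      Ico_add_one_left_eq_Ioo, ← Fin.map_valEmbedding_Ioi, sum_map]
    exact sum_congr rfl fun i _ => hσ i
  rw [hIio, hIoi, shift]

end shift

noncomputable def factor (s2 : ℕ) (lam a c u v : ℂ) : ℂ :=
  ∏ m ∈ range s2,
    (Complex.exp ((a / (s2 : ℂ)) * (v - u))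
      + Complex.exp ((a / (s2 : ℂ)) * (u - v)
          + 2 * lam * (((m : ℂ) + 1) - (s2 : ℂ) / 2 - 1 / 2) + 2 * lam * c))

theorem factor_neg (s2 : ℕ) (lam a c u v : ℂ) :
    factor s2 lam (-a) c u v = factor s2 lam a c v u := by
  unfold factor
  congr! 3 <;> ring

theorem eq_exp_mul_prod_range {s2 N : ℕ} {lam : ℂ} {σ : Fin N → ℂ} {f : ℕ → ℂ}
    (hσ : ∀ i : Fin N, σ i = f i) (u v : ℂ) :
    Gn s2 lam N σ u v = Complex.exp (-lam * s2 * ∑ n ∈ range N, f n) *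
      ∏ n ∈ range N, factor s2 lam (f n) (shift N f n) u v := by
  rw [Gn, ← Fin.sum_univ_eq_sum_range, ← Fin.prod_univ_eq_prod_range]
  simp only [factor, ← hσ, ← sum_Ioi_sub_sum_Iio hσ]

end Gn

/-- Reduction step of Appendix A: if `σ_k + σ_{k+1} = 0` for some `k < N`, then
`G_N(σ)(u,v)` equals a symmetric function of `(u,v)` times `G_{N−2}` of the sequence
with the entries `k, k+1` omitted. -/
theorem Gn_reduction (s2 : ℕ) (lam : ℂ)
    (N : ℕ) (σ : Fin N → ℂ)
    (k : ℕ) (hk : k + 2 ≤ N)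
    (hzero : σ ⟨k, by omega⟩ + σ ⟨k + 1, by omega⟩ = 0) :
    ∃ H : ℂ → ℂ → ℂ, (∀ u v, H u v = H v u) ∧
      ∀ u v, Gn s2 lam N σ u v
        = H u v * Gn s2 lam (N - 2)
            (fun i => if h : (i : ℕ) < k then σ ⟨i, by omega⟩ else σ ⟨(i : ℕ) + 2, by omega⟩)
            u v := by
  set f : ℕ → ℂ := fun n => if h : n < N then σ ⟨n, h⟩ else 0
  have hf : f k + f (k + 1) = 0 := by simpa [f, show k < N by omega, show k + 1 < N by omega]
  set c := Gn.shift N f k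
  refine ⟨fun u v => Gn.factor s2 lam (f k) c u v * Gn.factor s2 lam (-f k) c u v,
    fun u v => by simp only [Gn.factor_neg, mul_comm], fun u v => ?_⟩
  rw [Gn.eq_exp_mul_prod_range (f := f) (fun i => by simp [f]),
    Gn.eq_exp_mul_prod_range (f := f ∘ skipTwo k) (fun i => ?_)]
  · simp only [Function.comp_apply, Gn.shift_comp_skipTwo hf hk]
    rw [sum_range_comp_skipTwo hf, skipTwo_of_le (by omega), Nat.sub_add_cancel (by omega),
      prod_range_eq_mul_prod_range_skipTwo _ hk, Gn.shift_succ_of_add_eq_zero hf,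
      eq_neg_of_add_eq_zero_right hf]
    ring
  · have hiN := i.isLt
    rcases lt_or_ge (i : ℕ) k with hi | hi
    · simp [f, hi, skipTwo_of_lt hi, show (i : ℕ) < N by omega]
    · simp [f, not_lt.mpr hi, skipTwo_of_le hi, show (i : ℕ) + 2 < N by omega]
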